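/- arXiv:2302.04883 — 4 statements merged into one kernel-verified Lean document; each statement's English description precedes it below -/
import Mathlib

section
/- For a divisible non-Markovian evolution, if T^Λ = τ^Λ then T^Λ = τ^Λ = t^Λ; i.e., the configuration T^Λ = τ^Λ < t^Λ is impossible. -/
/-!
If instantaneous backflow occurs at arbitrarily small scales `ε`, then, because `τ^Λ = T^Λ`,
there are backflow windows `[T, T + ε]` starting just after `T^Λ`; they cannot start at or before
`T^Λ`, since such a window is CPTP (split it at `T^Λ` when it straddles `T^Λ`). Evolving from such
a `T = T^Λ + δ`, the map leaves the CPTP set before `T + ε`, which pins the exit time from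
`T^Λ + δ` within `δ + ε` of `T^Λ`, so `t^Λ = T^Λ`.
Otherwise all short intermediate maps are CPTP, hence by composition all of them are. Then the
backflow sets are empty, so `τ^Λ = sInf ∅ = 0 = T^Λ`, and the exit time from `δ` is `0` or `δ`,
so again `t^Λ = 0 = T^Λ`.
-/

open Filter Set Topology

section

variable {α : Type*}

noncomputable def backflowStart (C : Set (α → α)) (V : ℝ → ℝ → α → α) (ε : ℝ) : ℝ :=
  sInf {T : ℝ | 0 ≤ T ∧ V (T + ε) T ∉ C}

noncomputable def exitTime (C : Set (α → α)) (V : ℝ → ℝ → α → α) (s : ℝ) : ℝ :=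
  sInf {T : ℝ | s ≤ T ∧ V T s ∉ C}

variable {C : Set (α → α)} {V : ℝ → ℝ → α → α}

theorem exitTime_mem_Icc {s t : ℝ} (hst : s ≤ t) (ht : V t s ∉ C) :
    exitTime C V s ∈ Icc s t :=
  ⟨le_csInf ⟨t, hst, ht⟩ fun _ h => h.1, csInf_le ⟨s, fun _ h => h.1⟩ ⟨hst, ht⟩⟩

theorem exitTime_mem_Icc_of_forall_lt {s : ℝ} (hs : 0 ≤ s) (h : ∀ t, s < t → V t s ∈ C) :
    exitTime C V s ∈ Icc 0 s := by
  by_cases hss : V s s ∈ C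
  · have hempty : {T : ℝ | s ≤ T ∧ V T s ∉ C} = ∅ :=
      eq_empty_of_forall_notMem fun T ⟨hsT, hT⟩ =>
        hT (hsT.lt_or_eq.elim (h T) fun e => e ▸ hss)
    simp [exitTime, hempty, hs]
  · obtain ⟨hle, hge⟩ := exitTime_mem_Icc le_rfl hss
    exact ⟨hs.trans hle, hge⟩

-- With no short backflow every backflow set is empty, so `sInf ∅ = 0` forces the limit to `0`.
theorem eq_zero_of_tendsto_backflowStart {τ ε₀ : ℝ}
    (hτ : Tendsto (backflowStart C V) (𝓝[>] 0) (𝓝 τ)) (hε₀ : 0 < ε₀)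
    (hshort : ∀ ε ∈ Ioo 0 ε₀, ∀ T, 0 ≤ T → V (T + ε) T ∈ C) : τ = 0 := by
  have hzero : ∀ᶠ ε in 𝓝[>] 0, backflowStart C V ε = 0 := by
    filter_upwards [Ioo_mem_nhdsGT hε₀] with ε hε
    have hempty : {T : ℝ | 0 ≤ T ∧ V (T + ε) T ∉ C} = ∅ :=
      eq_empty_of_forall_notMem fun T hT => hT.2 (hshort ε hε T hT.1)
    rw [backflowStart, hempty, Real.sInf_empty]
  exact tendsto_nhds_unique hτ (tendsto_const_nhds.congr' (hzero.mono fun _ h => h.symm))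

section Composition

variable (hC : ∀ f g : α → α, f ∈ C → g ∈ C → f ∘ g ∈ C)
  (hcomp : ∀ t₁ t₂ t₃ : ℝ, 0 ≤ t₁ → t₁ ≤ t₂ → t₂ ≤ t₃ → V t₃ t₁ = V t₃ t₂ ∘ V t₂ t₁)
include hC hcomp

theorem mem_of_lt_of_forall_short {ε₀ : ℝ} (hε₀ : 0 < ε₀)
    (hshort : ∀ ε ∈ Ioo 0 ε₀, ∀ T, 0 ≤ T → V (T + ε) T ∈ C)
    {s t : ℝ} (hs : 0 ≤ s) (hst : s < t) : V t s ∈ C := by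
  have short : ∀ s t, 0 ≤ s → s < t → t - s < ε₀ → V t s ∈ C := fun s t hs hst hlt => by
    simpa using hshort (t - s) ⟨by linarith, hlt⟩ s hs
  have chain : ∀ n : ℕ, ∀ s t, 0 ≤ s → s < t → t - s < n * (ε₀ / 2) → V t s ∈ C := by
    intro n
    induction n with
    | zero => intro s t _ hst hlt; simp only [Nat.cast_zero, zero_mul] at hlt; linarith
    | succ n ih =>
      intro s t hs hst hlt
      push_cast at hlt
      rcases lt_or_ge (t - s) ε₀ with hlt' | hge
      · exact short s t hs hst hlt'
      · rw [hcomp s (s + ε₀ / 2) t hs (by linarith) (by linarith)]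
        exact hC _ _ (ih _ _ (by linarith) (by linarith) (by linarith))
          (short _ _ hs (by linarith) (by linarith))
  obtain ⟨n, hn⟩ := exists_nat_gt ((t - s) / (ε₀ / 2))
  exact chain n s t hs hst ((div_lt_iff₀ (by positivity)).mp hn)

theorem cutoff_lt_of_backflow {TΛ : ℝ}
    (hA : ∀ s t : ℝ, 0 ≤ s → s ≤ t → t ≤ TΛ → V t s ∈ C)
    (hB : ∀ t : ℝ, TΛ ≤ t → V t TΛ ∈ C)
    {T ε : ℝ} (hT : 0 ≤ T) (hε : 0 ≤ ε) (h : V (T + ε) T ∉ C) : TΛ < T := by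
  by_contra! hle
  rcases le_or_gt (T + ε) TΛ with hin | hout
  · exact h (hA T (T + ε) hT (by linarith) hin)
  · rw [hcomp T TΛ (T + ε) hT hle hout.le] at h
    exact h (hC _ _ (hB _ hout.le) (hA T TΛ hT hle le_rfl))

theorem exists_exitTime_near_of_no_short_backflow {TΛ ε₀ η : ℝ}
    (hτ : Tendsto (backflowStart C V) (𝓝[>] 0) (𝓝 TΛ)) (hε₀ : 0 < ε₀)
    (hshort : ∀ ε ∈ Ioo 0 ε₀, ∀ T, 0 ≤ T → V (T + ε) T ∈ C) (hη : 0 < η) :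
    ∃ δ ∈ Ioo 0 η, exitTime C V (TΛ + δ) ∈ Icc TΛ (TΛ + η) := by
  obtain rfl := eq_zero_of_tendsto_backflowStart hτ hε₀ hshort
  refine ⟨η / 2, ⟨half_pos hη, half_lt_self hη⟩, ?_⟩
  obtain ⟨hge, hle⟩ := exitTime_mem_Icc_of_forall_lt (C := C) (V := V) (half_pos hη).le
    fun t ht => mem_of_lt_of_forall_short hC hcomp hε₀ hshort (half_pos hη).le ht
  rw [zero_add, zero_add]
  exact ⟨hge, hle.trans (half_le_self hη.le)⟩

theorem exists_exitTime_near_of_frequent_backflow {TΛ η : ℝ}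
    (hA : ∀ s t : ℝ, 0 ≤ s → s ≤ t → t ≤ TΛ → V t s ∈ C)
    (hB : ∀ t : ℝ, TΛ ≤ t → V t TΛ ∈ C)
    (hτ : Tendsto (backflowStart C V) (𝓝[>] 0) (𝓝 TΛ))
    (hfreq : ∀ ε₀ > 0, ∃ ε ∈ Ioo 0 ε₀, ∃ T, 0 ≤ T ∧ V (T + ε) T ∉ C) (hη : 0 < η) :
    ∃ δ ∈ Ioo 0 η, exitTime C V (TΛ + δ) ∈ Icc TΛ (TΛ + η) := by
  obtain ⟨u, hu, hsub⟩ := mem_nhdsGT_iff_exists_Ioo_subset.mp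
    (hτ (Iio_mem_nhds (lt_add_of_pos_right TΛ (half_pos hη))))
  obtain ⟨ε, ⟨hε, hεlt⟩, T₀, hT₀, hT₀C⟩ := hfreq (min u (η / 4)) (lt_min hu (by positivity))
  have hstart : backflowStart C V ε < TΛ + η / 2 := hsub ⟨hε, hεlt.trans_le (min_le_left _ _)⟩
  have hεη : ε < η / 4 := hεlt.trans_le (min_le_right _ _)
  obtain ⟨T, ⟨hT, hTC⟩, hTlt⟩ := exists_lt_of_csInf_lt (s := {T : ℝ | 0 ≤ T ∧ V (T + ε) T ∉ C})
    ⟨T₀, hT₀, hT₀C⟩ (lt_add_of_pos_right (backflowStart C V ε) hε)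
  have hcut : TΛ < T := cutoff_lt_of_backflow hC hcomp hA hB hT hε.le hTC
  obtain ⟨hge, hle⟩ := exitTime_mem_Icc (by linarith) hTC
  refine ⟨T - TΛ, ⟨by linarith, by linarith⟩, ?_⟩
  rw [add_sub_cancel]
  exact ⟨hcut.le.trans hge, by linarith⟩

end Composition

end

theorem eq_of_tendsto_nhdsGT_of_exists_mem_Icc {f : ℝ → ℝ} {L a : ℝ}
    (hf : Tendsto f (𝓝[>] 0) (𝓝 L))
    (hnear : ∀ η > 0, ∃ δ ∈ Ioo 0 η, f δ ∈ Icc a (a + η)) : L = a := by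
  have hmem : ∀ η > 0, L ∈ Icc a (a + η) := fun η hη => by
    refine isClosed_Icc.mem_of_frequently_of_tendsto ?_ hf
    refine (nhdsGT_basis 0).frequently_iff.mpr fun u hu => ?_
    obtain ⟨δ, hδ, hfδ⟩ := hnear (min u η) (lt_min hu hη)
    exact ⟨δ, ⟨hδ.1, hδ.2.trans_le (min_le_left _ _)⟩,
      hfδ.1, hfδ.2.trans (by gcongr; exact min_le_right _ _)⟩
  exact le_antisymm (le_of_forall_pos_le_add fun η hη => (hmem η hη).2) (hmem 1 one_pos).1

theorem stmt9_general {α : Type*} (C : Set (α → α))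
    (hC : ∀ f g : α → α, f ∈ C → g ∈ C → f ∘ g ∈ C)
    (V : ℝ → ℝ → (α → α))
    (hcomp : ∀ t₁ t₂ t₃ : ℝ, 0 ≤ t₁ → t₁ ≤ t₂ → t₂ ≤ t₃ → V t₃ t₁ = V t₃ t₂ ∘ V t₂ t₁)
    (TΛ τΛ tΛ : ℝ)
    (hA : ∀ s t : ℝ, 0 ≤ s → s ≤ t → t ≤ TΛ → V t s ∈ C)
    (hB : ∀ t : ℝ, TΛ ≤ t → V t TΛ ∈ C)
    (hτ : Filter.Tendsto (fun ε : ℝ => sInf {T : ℝ | 0 ≤ T ∧ V (T + ε) T ∉ C})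
      (nhdsWithin 0 (Set.Ioi 0)) (nhds τΛ))
    (ht : Filter.Tendsto (fun δ : ℝ => sInf {T : ℝ | TΛ + δ ≤ T ∧ V T (TΛ + δ) ∉ C})
      (nhdsWithin 0 (Set.Ioi 0)) (nhds tΛ))
    (heq : TΛ = τΛ) :
    TΛ = τΛ ∧ τΛ = tΛ := by
  subst heq
  refine ⟨rfl, (eq_of_tendsto_nhdsGT_of_exists_mem_Icc ht fun η hη => ?_).symm⟩
  by_cases hshort : ∃ ε₀ > 0, ∀ ε ∈ Ioo 0 ε₀, ∀ T, 0 ≤ T → V (T + ε) T ∈ C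
  · obtain ⟨ε₀, hε₀, hshort⟩ := hshort
    exact exists_exitTime_near_of_no_short_backflow hC hcomp hτ hε₀ hshort hη
  · push Not at hshort
    exact exists_exitTime_near_of_frequent_backflow hC hcomp hA hB hτ hshort hη

/-- For a divisible non-Markovian evolution, `TΛ = τΛ` implies
`TΛ = τΛ = tΛ`; i.e. the configuration `TΛ = τΛ < tΛ` is impossible. -/
theorem stmt9 {α : Type*} (C : Set (α → α))
    (hC : ∀ f g : α → α, f ∈ C → g ∈ C → f ∘ g ∈ C)
    (V : ℝ → ℝ → (α → α))
    (hcomp : ∀ t₁ t₂ t₃ : ℝ, 0 ≤ t₁ → t₁ ≤ t₂ → t₂ ≤ t₃ → V t₃ t₁ = V t₃ t₂ ∘ V t₂ t₁)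
    (TΛ τΛ tΛ : ℝ)
    (hA : ∀ s t : ℝ, 0 ≤ s → s ≤ t → t ≤ TΛ → V t s ∈ C)
    (hB : ∀ t : ℝ, TΛ ≤ t → V t TΛ ∈ C)
    (hmax : ∀ T : ℝ, 0 ≤ T →
      (∀ s t : ℝ, 0 ≤ s → s ≤ t → t ≤ T → V t s ∈ C) →
      (∀ t : ℝ, T ≤ t → V t T ∈ C) → T ≤ TΛ)
    (hNM : ∃ s t : ℝ, 0 ≤ s ∧ s ≤ t ∧ V t s ∉ C)
    (hτ : Filter.Tendsto (fun ε : ℝ => sInf {T : ℝ | 0 ≤ T ∧ V (T + ε) T ∉ C})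
      (nhdsWithin 0 (Set.Ioi 0)) (nhds τΛ))
    (ht : Filter.Tendsto (fun δ : ℝ => sInf {T : ℝ | TΛ + δ ≤ T ∧ V T (TΛ + δ) ∉ C})
      (nhdsWithin 0 (Set.Ioi 0)) (nhds tΛ))
    (heq : TΛ = τΛ) :
    TΛ = τΛ ∧ τΛ = tΛ :=
  stmt9_general C hC V hcomp TΛ τΛ tΛ hA hB hτ ht heq
end

section
/- Let Λ be an NNM depolarizing evolution with characteristic function f, useless-noise cutoff T^Λ with f(T^Λ) ∈ (0,1), and total revival Δ > 0. Its PNM core is the depolarizing evolution with characteristic function f̄(t) = f(t+T^Λ)/f(T^Λ), and the trace-distance flux measures satisfy M^D(Λ̄) = 2Δ/f(T^Λ) > M^D(Λ) = 2Δ. -/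
open scoped ComplexOrder
open MeasureTheory

/-- Trace norm `‖A‖₁ = Tr √(AᴴA)`. -/
noncomputable def traceNorm {d : ℕ} (A : Matrix (Fin d) (Fin d) ℂ) : ℝ :=
  ∑ i, Real.sqrt ((Matrix.posSemidef_conjTranspose_mul_self A).1.eigenvalues i)

/-- Depolarizing map `Λ(ρ) = r ρ + (1−r) Tr(ρ) 𝟙/d`. -/
noncomputable def depol (d : ℕ) (r : ℝ) (ρ : Matrix (Fin d) (Fin d) ℂ) :
    Matrix (Fin d) (Fin d) ℂ :=
  (r : ℂ) • ρ + ((1 - r : ℝ) : ℂ) • ρ.trace • ((d : ℂ)⁻¹ • (1 : Matrix (Fin d) (Fin d) ℂ))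

/-- Trace-distance flux for a pair of states under the depolarizing evolution `f`. -/
noncomputable def fluxD (d : ℕ) (f : ℝ → ℝ) (ρ₁ ρ₂ : Matrix (Fin d) (Fin d) ℂ)
    (u : ℝ) : ℝ :=
  deriv (fun v => traceNorm (depol d (f v) ρ₁ - depol d (f v) ρ₂)) u

/-- Trace-distance flux non-Markovianity measure for the depolarizing evolution `f`. -/
noncomputable def MD (d : ℕ) (f : ℝ → ℝ) : ℝ :=
  sSup {x : ℝ | ∃ ρ₁ ρ₂ : Matrix (Fin d) (Fin d) ℂ,
    ρ₁.PosSemidef ∧ ρ₁.trace = 1 ∧ ρ₂.PosSemidef ∧ ρ₂.trace = 1 ∧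
    x = ∫ u in {u : ℝ | 0 ≤ u ∧ 0 < fluxD d f ρ₁ ρ₂ u}, fluxD d f ρ₁ ρ₂ u}

/-!
For two states the depolarizing map acts on `ρ₁ - ρ₂` as multiplication by `f t`, so the trace
distance evolves as `f t * ‖ρ₁ - ρ₂‖₁` and the flux integral factorizes as `‖ρ₁ - ρ₂‖₁ * Δ`.
Since `‖ρ₁ - ρ₂‖₁ ≤ 2`, with equality for orthogonal pure states, `M^D = 2Δ`. As `f` is
antitone on `[0, T^Λ]`, every revival of `f` happens after `T^Λ`, so shifting by `T^Λ` keeps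
`Δ` while dividing by `f(T^Λ)` rescales it to `Δ / f(T^Λ) > Δ`.
-/

namespace Matrix.IsHermitian

variable {n 𝕜 : Type*} [Fintype n] [DecidableEq n] [RCLike 𝕜] {A : Matrix n n 𝕜}

lemma trace_cfc (hA : A.IsHermitian) (g : ℝ → ℝ) :
    (cfc g A).trace = ∑ i, (g (hA.eigenvalues i) : 𝕜) := by
  rw [hA.cfc_eq, IsHermitian.cfc, Unitary.conjStarAlgAut_apply, Matrix.trace_mul_cycle,
    Unitary.coe_star_mul_self, one_mul, Matrix.trace_diagonal]
  rfl

end Matrix.IsHermitian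

section TraceNorm

open Matrix
open scoped MatrixOrder

variable {d : ℕ}

lemma traceNorm_nonneg (A : Matrix (Fin d) (Fin d) ℂ) : 0 ≤ traceNorm A :=
  Finset.sum_nonneg fun _ _ => Real.sqrt_nonneg _

lemma traceNorm_eq_trace_abs (A : Matrix (Fin d) (Fin d) ℂ) :
    (traceNorm A : ℂ) = (CFC.abs A).trace := by
  have hM := posSemidef_conjTranspose_mul_self A
  rw [← star_eq_conjTranspose] at hM
  rw [CFC.abs, CFC.sqrt_eq_real_sqrt _ hM.nonneg, cfcₙ_eq_cfc, hM.1.trace_cfc, traceNorm]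
  push_cast
  rfl

lemma traceNorm_ofReal_smul (r : ℝ) (A : Matrix (Fin d) (Fin d) ℂ) :
    traceNorm ((r : ℂ) • A) = |r| * traceNorm A := by
  apply Complex.ofReal_injective
  rw [traceNorm_eq_trace_abs, CFC.abs_smul, trace_smul, ← traceNorm_eq_trace_abs]
  simp

lemma Matrix.IsHermitian.traceNorm_eq {A : Matrix (Fin d) (Fin d) ℂ} (hA : A.IsHermitian) :
    traceNorm A = ∑ i, |hA.eigenvalues i| := by
  apply Complex.ofReal_injective
  rw [traceNorm_eq_trace_abs, CFC.abs_eq_cfc_norm A hA.isSelfAdjoint, hA.trace_cfc]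
  push_cast
  rfl

lemma traceNorm_diagonal (μ : Fin d → ℝ) :
    traceNorm (diagonal fun i => (μ i : ℂ)) = ∑ i, |μ i| := by
  have habs : CFC.abs (diagonal fun i => (μ i : ℂ)) = diagonal fun i => ((|μ i| : ℝ) : ℂ) := by
    rw [CFC.abs, CFC.sqrt_eq_iff _ _ (posSemidef_conjTranspose_mul_self _).nonneg
      (nonneg_iff_posSemidef.mpr (posSemidef_diagonal_iff.mpr fun i => by positivity)),
      star_eq_conjTranspose, diagonal_conjTranspose, diagonal_mul_diagonal, diagonal_mul_diagonal]
    congr 1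
    ext i
    simp [← Complex.ofReal_mul, abs_mul_abs_self]
  apply Complex.ofReal_injective
  rw [traceNorm_eq_trace_abs, habs, trace_diagonal]
  push_cast
  rfl

lemma traceNorm_sub_le {P Q : Matrix (Fin d) (Fin d) ℂ} (hP : P.PosSemidef) (hQ : Q.PosSemidef) :
    traceNorm (P - Q) ≤ P.trace.re + Q.trace.re := by
  have hA : (P - Q).IsHermitian := hP.1.sub hQ.1
  set U : Matrix (Fin d) (Fin d) ℂ := (hA.eigenvectorUnitary : Matrix (Fin d) (Fin d) ℂ)
  have hU : U * star U = 1 := Unitary.coe_mul_star_self _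
  have hdiag : star U * (P - Q) * U = diagonal (Complex.ofReal ∘ hA.eigenvalues) := by
    simpa using hA.conjStarAlgAut_star_eigenvectorUnitary
  have htrace : ∀ M : Matrix (Fin d) (Fin d) ℂ, (star U * M * U).trace = M.trace := fun M => by
    rw [trace_mul_cycle, hU, one_mul]
  have hP' := hP.conjTranspose_mul_mul_same U
  have hQ' := hQ.conjTranspose_mul_mul_same U
  rw [← star_eq_conjTranspose] at hP' hQ'
  rw [hA.traceNorm_eq, ← htrace P, ← htrace Q, trace, trace, Complex.re_sum, Complex.re_sum,
    ← Finset.sum_add_distrib]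
  refine Finset.sum_le_sum fun i _ => ?_
  -- in an eigenbasis of `P - Q` each eigenvalue is a difference of two nonnegative diagonal entries
  have hev : hA.eigenvalues i = ((star U * P * U) i i).re - ((star U * Q * U) i i).re := by
    rw [← Complex.sub_re, ← Matrix.sub_apply, ← Matrix.sub_mul, ← Matrix.mul_sub, hdiag]
    simp
  have hp := (Complex.nonneg_iff.mp (hP'.diag_nonneg (i := i))).1
  have hq := (Complex.nonneg_iff.mp (hQ'.diag_nonneg (i := i))).1
  rw [diag_apply, diag_apply, hev, abs_le]
  constructor <;> linarith

lemma exists_states_traceNorm_sub_eq_two (hd : 1 < d) :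
    ∃ ρ₁ ρ₂ : Matrix (Fin d) (Fin d) ℂ, ρ₁.PosSemidef ∧ ρ₁.trace = 1 ∧
      ρ₂.PosSemidef ∧ ρ₂.trace = 1 ∧ traceNorm (ρ₁ - ρ₂) = 2 := by
  let e : Fin d → Fin d → ℝ := fun c => Pi.single c 1
  have hsum : ∀ c, ∑ i, e c i = 1 := fun c => by simp [e]
  have hstate : ∀ c, (diagonal fun i => (e c i : ℂ)).PosSemidef ∧
      (diagonal fun i => (e c i : ℂ)).trace = 1 := fun c =>
    ⟨posSemidef_diagonal_iff.mpr fun i => by by_cases h : i = c <;> simp [e, h],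
      by rw [trace_diagonal, ← Complex.ofReal_sum, hsum, Complex.ofReal_one]⟩
  let a : Fin d := ⟨0, by omega⟩
  let b : Fin d := ⟨1, hd⟩
  have hab : a ≠ b := by simp [a, b, Fin.ext_iff]
  refine ⟨_, _, (hstate a).1, (hstate a).2, (hstate b).1, (hstate b).2, ?_⟩
  have habs : ∀ i, |e a i - e b i| = e a i + e b i := fun i => by
    by_cases hia : i = a <;> by_cases hib : i = b
    · exact absurd (hia.symm.trans hib) hab
    all_goals simp [e, hia, hib, hab, hab.symm]
  simp_rw [diagonal_sub, ← Complex.ofReal_sub]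
  rw [traceNorm_diagonal, Finset.sum_congr rfl fun i _ => habs i, Finset.sum_add_distrib, hsum,
    hsum]
  norm_num

end TraceNorm

lemma depol_sub_depol {d : ℕ} (r : ℝ) {ρ₁ ρ₂ : Matrix (Fin d) (Fin d) ℂ}
    (h : ρ₁.trace = ρ₂.trace) : depol d r ρ₁ - depol d r ρ₂ = (r : ℂ) • (ρ₁ - ρ₂) := by
  rw [depol, depol, h]
  module

lemma fluxD_eq {d : ℕ} {g : ℝ → ℝ} {u : ℝ} (hg : DifferentiableAt ℝ g u) (hgu : 0 < g u)
    {ρ₁ ρ₂ : Matrix (Fin d) (Fin d) ℂ} (h : ρ₁.trace = ρ₂.trace) :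
    fluxD d g ρ₁ ρ₂ u = traceNorm (ρ₁ - ρ₂) * deriv g u := by
  have hloc : (fun v => traceNorm (depol d (g v) ρ₁ - depol d (g v) ρ₂)) =ᶠ[nhds u]
      fun v => traceNorm (ρ₁ - ρ₂) * g v := by
    filter_upwards [hg.continuousAt.eventually (eventually_gt_nhds hgu)] with v hv
    rw [depol_sub_depol _ h, traceNorm_ofReal_smul, abs_of_pos hv, mul_comm]
  rw [fluxD, hloc.deriv_eq, deriv_const_mul _ hg]

noncomputable def posPartIntegral (h : ℝ → ℝ) : ℝ :=
  ∫ u in {u : ℝ | 0 ≤ u ∧ 0 < h u}, h u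

section PosPartIntegral

variable {h h₁ h₂ : ℝ → ℝ}

lemma measurableSet_nonneg_and_pos (hh : Measurable h) :
    MeasurableSet {u : ℝ | 0 ≤ u ∧ 0 < h u} :=
  (measurableSet_le measurable_const measurable_id).inter (measurableSet_lt measurable_const hh)

lemma posPartIntegral_nonneg (hh : Measurable h) : 0 ≤ posPartIntegral h :=
  setIntegral_nonneg (measurableSet_nonneg_and_pos hh) fun _ hu => hu.2.le

lemma posPartIntegral_congr (hh : Measurable h₁) (h : Set.EqOn h₁ h₂ (Set.Ici 0)) :
    posPartIntegral h₁ = posPartIntegral h₂ := by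
  have hset : {u : ℝ | 0 ≤ u ∧ 0 < h₁ u} = {u : ℝ | 0 ≤ u ∧ 0 < h₂ u} :=
    Set.ext fun _ => and_congr_right fun hu => by rw [h hu]
  rw [posPartIntegral, setIntegral_congr_fun (measurableSet_nonneg_and_pos hh)
    fun u hu => h hu.1, hset, posPartIntegral]

lemma posPartIntegral_const_mul {c : ℝ} (hc : 0 ≤ c) :
    posPartIntegral (fun u => c * h u) = c * posPartIntegral h := by
  rcases hc.eq_or_lt with rfl | hc
  · simp [posPartIntegral]
  · have hset : {u : ℝ | 0 ≤ u ∧ 0 < c * h u} = {u : ℝ | 0 ≤ u ∧ 0 < h u} := by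
      simp only [mul_pos_iff_of_pos_left hc]
    rw [posPartIntegral, hset, integral_const_mul, posPartIntegral]

lemma posPartIntegral_comp_add {T : ℝ} (hT : 0 ≤ T) (hh : ∀ u ∈ Set.Ico 0 T, h u ≤ 0) :
    posPartIntegral (fun u => h (u + T)) = posPartIntegral h := by
  have hset : {u : ℝ | 0 ≤ u ∧ 0 < h u} = {w : ℝ | T ≤ w ∧ 0 < h w} := by
    refine Set.ext fun w => ⟨fun ⟨hw, hpos⟩ => ⟨?_, hpos⟩, fun ⟨hw, hpos⟩ => ⟨hT.trans hw, hpos⟩⟩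
    exact not_lt.mp fun hwT => (hh w ⟨hw, hwT⟩).not_gt hpos
  have hpre : {u : ℝ | 0 ≤ u ∧ 0 < h (u + T)} = (· + T) ⁻¹' {w : ℝ | T ≤ w ∧ 0 < h w} := by
    ext u
    simp
  rw [posPartIntegral, posPartIntegral, hset, hpre,
    (measurePreserving_add_right volume T).setIntegral_preimage_emb
      (measurableEmbedding_addRight T)]

end PosPartIntegral

lemma posPartIntegral_fluxD {d : ℕ} {g : ℝ → ℝ}
    (hg : ∀ u, 0 ≤ u → DifferentiableAt ℝ g u) (hpos : ∀ u, 0 ≤ u → 0 < g u)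
    {ρ₁ ρ₂ : Matrix (Fin d) (Fin d) ℂ} (h : ρ₁.trace = ρ₂.trace) :
    posPartIntegral (fluxD d g ρ₁ ρ₂) = traceNorm (ρ₁ - ρ₂) * posPartIntegral (deriv g) := by
  rw [posPartIntegral_congr (h₁ := fluxD d g ρ₁ ρ₂) (measurable_deriv _)
    fun u hu => fluxD_eq (hg u hu) (hpos u hu) h, posPartIntegral_const_mul (traceNorm_nonneg _)]

lemma MD_eq_two_mul_posPartIntegral {d : ℕ} (hd : 1 < d) {g : ℝ → ℝ}
    (hg : ∀ u, 0 ≤ u → DifferentiableAt ℝ g u) (hpos : ∀ u, 0 ≤ u → 0 < g u) :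
    MD d g = 2 * posPartIntegral (deriv g) := by
  refine IsGreatest.csSup_eq ⟨?_, ?_⟩
  · obtain ⟨ρ₁, ρ₂, hρ₁, htr₁, hρ₂, htr₂, hnorm⟩ := exists_states_traceNorm_sub_eq_two hd
    refine ⟨ρ₁, ρ₂, hρ₁, htr₁, hρ₂, htr₂, ?_⟩
    rw [← hnorm, ← posPartIntegral_fluxD hg hpos (htr₁.trans htr₂.symm)]
    rfl
  · rintro x ⟨ρ₁, ρ₂, hρ₁, htr₁, hρ₂, htr₂, rfl⟩
    have hle : traceNorm (ρ₁ - ρ₂) ≤ 2 := by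
      simpa [htr₁, htr₂, one_add_one_eq_two] using traceNorm_sub_le hρ₁ hρ₂
    change posPartIntegral (fluxD d g ρ₁ ρ₂) ≤ _
    rw [posPartIntegral_fluxD hg hpos (htr₁.trans htr₂.symm)]
    exact mul_le_mul_of_nonneg_right hle (posPartIntegral_nonneg (measurable_deriv _))

lemma AntitoneOn.deriv_nonpos_of_mem_Icc {g : ℝ → ℝ} {a b x : ℝ}
    (hg : AntitoneOn g (Set.Icc a b)) (hab : a < b) (hx : x ∈ Set.Icc a b)
    (hd : DifferentiableAt ℝ g x) : deriv g x ≤ 0 := by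
  rw [← hd.derivWithin (uniqueDiffOn_Icc hab x hx)]
  exact hg.derivWithin_nonpos

theorem stmt16_general {d : ℕ} (hd : 1 < d) (f : ℝ → ℝ) (TΛ Δ : ℝ)
    (hrange : ∀ u, 0 ≤ u → f u ∈ Set.Ioc (0 : ℝ) 1)
    (hdiff : ∀ u, 0 ≤ u → DifferentiableAt ℝ f u)
    (hTΛ : 0 ≤ TΛ) (hfTΛ : f TΛ ∈ Set.Ioo (0 : ℝ) 1)
    (hmono : AntitoneOn f (Set.Icc 0 TΛ))
    (hΔ : Δ = ∫ u in {u : ℝ | 0 ≤ u ∧ 0 < deriv f u}, deriv f u) (hΔpos : 0 < Δ) :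
    MD d (fun u => f (u + TΛ) / f TΛ) = 2 * Δ / f TΛ ∧
    MD d f = 2 * Δ ∧
    MD d f < MD d (fun u => f (u + TΛ) / f TΛ) := by
  have hpos : ∀ u, 0 ≤ u → 0 < f u := fun u hu => (hrange u hu).1
  have hnonpos : ∀ u ∈ Set.Ico 0 TΛ, deriv f u ≤ 0 := fun u hu =>
    hmono.deriv_nonpos_of_mem_Icc (hu.1.trans_lt hu.2) (Set.Ico_subset_Icc_self hu)
      (hdiff u hu.1)
  have hderiv : deriv (fun u => f (u + TΛ) / f TΛ) = fun u => (f TΛ)⁻¹ * deriv f (u + TΛ) := by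
    funext u
    rw [deriv_div_const, deriv_comp_add_const, div_eq_inv_mul]
  have hMD : MD d f = 2 * Δ := by
    rw [MD_eq_two_mul_posPartIntegral hd hdiff hpos, hΔ, posPartIntegral]
  have hMDcore : MD d (fun u => f (u + TΛ) / f TΛ) = 2 * Δ / f TΛ := by
    rw [MD_eq_two_mul_posPartIntegral hd
      (fun u hu => (differentiableAt_comp_add_const.mpr (hdiff _ (by linarith))).div_const _)
      (fun u hu => div_pos (hpos _ (by linarith)) hfTΛ.1),
      hderiv, posPartIntegral_const_mul (inv_nonneg.mpr hfTΛ.1.le),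
      posPartIntegral_comp_add (h := deriv f) hTΛ hnonpos, hΔ, posPartIntegral]
    ring
  refine ⟨hMDcore, hMD, ?_⟩
  rw [hMD, hMDcore, lt_div_iff₀ hfTΛ.1]
  nlinarith [hfTΛ.2]

/-- For an NNM depolarizing evolution with characteristic function `f`,
useless-noise cutoff `TΛ` (with `f TΛ ∈ (0,1)`) and total revival `Δ > 0`, the PNM core
has characteristic function `f̄(t) = f(t+TΛ)/f(TΛ)` and
`M^D(Λ̄) = 2Δ/f(TΛ) > M^D(Λ) = 2Δ`. -/
theorem stmt16 {d : ℕ} (hd : 1 < d) (f : ℝ → ℝ) (TΛ Δ : ℝ)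
    (hf : ContinuousOn f (Set.Ici 0)) (hf0 : f 0 = 1)
    (hrange : ∀ u, 0 ≤ u → f u ∈ Set.Ioc (0 : ℝ) 1)
    (hdiff : ∀ u, 0 ≤ u → DifferentiableAt ℝ f u)
    (hTΛ : 0 ≤ TΛ) (hfTΛ : f TΛ ∈ Set.Ioo (0 : ℝ) 1)
    (hmono : AntitoneOn f (Set.Icc 0 TΛ))
    (hdom : ∀ u, TΛ ≤ u → f u ≤ f TΛ)
    (hmax : ∀ T, 0 ≤ T → AntitoneOn f (Set.Icc 0 T) → (∀ u, T ≤ u → f u ≤ f T) →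
      f T ≠ 1 → T ≤ TΛ)
    (hΔ : Δ = ∫ u in {u : ℝ | 0 ≤ u ∧ 0 < deriv f u}, deriv f u) (hΔpos : 0 < Δ) :
    MD d (fun u => f (u + TΛ) / f TΛ) = 2 * Δ / f TΛ ∧
    MD d f = 2 * Δ ∧
    MD d f < MD d (fun u => f (u + TΛ) / f TΛ) :=
  stmt16_general hd f TΛ Δ hrange hdiff hTΛ hfTΛ hmono hΔ hΔpos
end

section
/- Consider the quasi-eternal non-Markovian qubit Pauli evolution with parameters α > 0 and t₀, whose intermediate maps have Choi minimal eigenvalue p_z(s,t) = (1/4)(1 + e^{−2α(t−s)} − 2e^{−α(t−s)} cosh^α(t−t₀)/cosh^α(s−t₀)). The dynamical maps Λ_t (case s=0) are CPTP for all t ≥ 0 if and only if t₀ ≥ t_{0,α} := max{0, (1/2)log(2^{1/α} − 1)}, and the useless-noise cutoff satisfies T^Λ = t₀ − t_{0,α}. -/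
/-!
With `u = exp (-2t)` and `r = exp (-2t₀)` one has `4 p_z(0,t) = 1 + u^α - 2((r+u)/(1+r))^α`, so
complete positivity of every `Λ_t` says that the chord `u ↦ (r+u)/(1+r)`, running from
`r/(1+r)` at `u = 0` to `1` at `u = 1`, stays below the power mean `M(u) = ((1+u^α)/2)^{1/α}`
on `(0,1]`. Both equal `1` at `u = 1`, so comparing slopes there forces `r ≤ 1` (`t₀ ≥ 0`), and
comparing values at `u = 0` forces `r/(1+r) ≤ 2^{-1/α}` (`t₀ ≥ ½ log(2^{1/α} - 1)`). These
suffice: for `α ≥ 1` the chord lies below the arithmetic mean `(1+u)/2 ≤ M(u)`, and for `α ≤ 1`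
convexity of `x ↦ x^{1/α}` puts `M` above its own chord from `2^{-1/α}` to `1`.

The intermediate maps are time translates, `p_z(s,t) = p_z^{(t₀-s)}(0,t-s)`, so both conditions
on the cutoff `T` reduce to `t₀ - T ≥ t_{0,α}`.
-/

open Real Set Filter Topology

/-- Smallest Choi eigenvalue `p_z(s,t)` of the intermediate map of the quasi-eternal
non-Markovian Pauli evolution with parameters `α, t₀`. -/
noncomputable def pzQE (α t₀ s t : ℝ) : ℝ :=
  (1 / 4) * (1 + Real.exp (-2 * α * (t - s)) -
    2 * Real.exp (-α * (t - s)) * (Real.cosh (t - t₀)) ^ α / (Real.cosh (s - t₀)) ^ α)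

/-- Threshold `t_{0,α} = max{0, (1/2)log(2^{1/α} − 1)}`. -/
noncomputable def t0a (α : ℝ) : ℝ :=
  max 0 ((1 / 2) * Real.log ((2 : ℝ) ^ (1 / α) - 1))

theorem ConvexOn.sub_le_sub_of_le {s : Set ℝ} {f : ℝ → ℝ} (hf : ConvexOn ℝ s f)
    {a b h : ℝ} (ha : a ∈ s) (hbh : b + h ∈ s) (hh : 0 < h) (hab : a ≤ b) :
    f (a + h) - f a ≤ f (b + h) - f b := by
  have hmem : ∀ x ∈ Icc a (b + h), x ∈ s := fun x hx => hf.1.ordConnected.out ha hbh hx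
  have h₁ : slope f a (a + h) ≤ slope f a (b + h) :=
    hf.slope_mono ha ⟨hmem _ ⟨by linarith, by linarith⟩, by simp [hh.ne']⟩
      ⟨hbh, by simp; linarith⟩ (by linarith)
  have h₂ : slope f (b + h) a ≤ slope f (b + h) b :=
    hf.slope_mono hbh ⟨ha, by simp; linarith⟩
      ⟨hmem _ ⟨hab, by linarith⟩, by simp [hh.ne']⟩ hab
  rw [slope_comm f (b + h) a] at h₂
  have key := h₁.trans h₂
  simp only [slope_def_field, add_sub_cancel_left, sub_add_cancel_left, div_neg,
    ← neg_div, neg_sub] at key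
  exact (div_le_div_iff_of_pos_right hh).1 key

theorem HasDerivAt.nonpos_of_eventually_le_left {f : ℝ → ℝ} {f' x : ℝ}
    (hf : HasDerivAt f f' x) (hmin : ∀ᶠ y in 𝓝[<] x, f x ≤ f y) : f' ≤ 0 := by
  refine le_of_tendsto (hasDerivAt_iff_tendsto_slope_left_right.1 hf).1 ?_
  filter_upwards [hmin, self_mem_nhdsWithin] with y hy hyx
  rw [slope_def_field]
  exact div_nonpos_of_nonneg_of_nonpos (by linarith) (by linarith [mem_Iio.1 hyx])

theorem two_mul_rpow_le_rpow_iff {α x y : ℝ} (hα : 0 < α) (hx : 0 ≤ x) (hy : 0 ≤ y) :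
    2 * x ^ α ≤ y ^ α ↔ 2 ^ α⁻¹ * x ≤ y := by
  rw [← rpow_le_rpow_iff (by positivity) hy hα, mul_rpow (by positivity) hx,
    ← rpow_mul zero_le_two, inv_mul_cancel₀ hα.ne', rpow_one]

theorem one_add_two_rpow_sub_one_mul_le {p v : ℝ} (hp : 1 ≤ p) (hv₀ : 0 < v) (hv₁ : v ≤ 1) :
    1 + (2 ^ p - 1) * v ^ p ≤ (1 + v) ^ p := by
  have h := (convexOn_rpow hp).sub_le_sub_of_le hv₀.le (by positivity : (0 : ℝ) ≤ 1 + v) hv₀ hv₁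
  rw [← two_mul, mul_rpow zero_le_two hv₀.le, one_rpow] at h
  linarith

/-- `4 * pzQE α t₀ 0 t` in the variables `r = exp (-2 t₀)`, `u = exp (-2 t)`. -/
noncomputable def reducedGap (α r u : ℝ) : ℝ :=
  1 + u ^ α - 2 * ((r + u) / (1 + r)) ^ α

section reducedGap

variable {α r u : ℝ}

theorem reducedGap_nonneg_of_one_le (hα : 1 ≤ α) (hr₀ : 0 ≤ r) (hr₁ : r ≤ 1) (hu₀ : 0 ≤ u)
    (hu₁ : u ≤ 1) : 0 ≤ reducedGap α r u := by
  have hchord : (r + u) / (1 + r) ≤ (1 + u) / 2 := by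
    rw [div_le_div_iff₀ (by linarith) two_pos]
    nlinarith [mul_nonneg (sub_nonneg.2 hr₁) (sub_nonneg.2 hu₁)]
  have hmean : ((1 + u) / 2) ^ α ≤ (1 + u ^ α) / 2 := by
    have h := (convexOn_rpow hα).2 (mem_Ici.2 zero_le_one) (mem_Ici.2 hu₀)
      (by norm_num : (0 : ℝ) ≤ 1 / 2) (by norm_num : (0 : ℝ) ≤ 1 / 2) (by norm_num)
    simp only [smul_eq_mul, one_rpow, mul_one] at h
    rw [show (1 + u) / 2 = 1 / 2 + 1 / 2 * u by ring]
    linarith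
  have := rpow_le_rpow (by positivity) hchord (by linarith : 0 ≤ α)
  unfold reducedGap
  linarith

theorem reducedGap_nonneg_of_le_one (hα₀ : 0 < α) (hα₁ : α ≤ 1) (hr₀ : 0 ≤ r)
    (hr : (2 ^ α⁻¹ - 1) * r ≤ 1) (hu₀ : 0 < u) (hu₁ : u ≤ 1) : 0 ≤ reducedGap α r u := by
  set q : ℝ := 2 ^ α⁻¹
  have hmean : 1 + (q - 1) * u ≤ (1 + u ^ α) ^ α⁻¹ := by
    have h := one_add_two_rpow_sub_one_mul_le (one_le_inv_iff₀.2 ⟨hα₀, hα₁⟩)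
      (rpow_pos_of_pos hu₀ α) (rpow_le_one hu₀.le hu₁ hα₀.le)
    rwa [← rpow_mul hu₀.le, mul_inv_cancel₀ hα₀.ne', rpow_one] at h
  have hchord : q * ((r + u) / (1 + r)) ≤ 1 + (q - 1) * u := by
    rw [mul_div_assoc', div_le_iff₀ (by linarith)]
    nlinarith [mul_nonneg (sub_nonneg.2 hr) (sub_nonneg.2 hu₁)]
  have h := (two_mul_rpow_le_rpow_iff hα₀ (by positivity) (by positivity)).2
    (hchord.trans hmean)
  rw [← rpow_mul (by positivity), inv_mul_cancel₀ hα₀.ne', rpow_one] at h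
  unfold reducedGap
  linarith

theorem reducedGap_one (hr : 0 ≤ r) : reducedGap α r 1 = 0 := by
  rw [reducedGap, add_comm r, div_self (by linarith), one_rpow]
  norm_num

theorem hasDerivAt_reducedGap_one (hr : 0 ≤ r) :
    HasDerivAt (reducedGap α r) (α - 2 * (α / (1 + r))) 1 := by
  have hpow : HasDerivAt (fun u : ℝ => u ^ α) α 1 := by
    simpa using hasDerivAt_rpow_const (x := 1) (p := α) (Or.inl one_ne_zero)
  have hbase : HasDerivAt (fun u : ℝ => (r + u) / (1 + r)) (1 / (1 + r)) 1 :=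
    ((hasDerivAt_id 1).const_add r).div_const (1 + r)
  have hone : (r + 1) / (1 + r) = 1 := by rw [add_comm r, div_self (by linarith)]
  have hcomp := hbase.rpow_const (p := α) (Or.inl (by rw [hone]; exact one_ne_zero))
  rw [hone, one_rpow, mul_one] at hcomp
  exact ((hpow.const_add 1).sub (hcomp.const_mul 2)).congr_deriv (by ring)

theorem le_one_of_reducedGap_nonneg (hα : 0 < α) (hr : 0 ≤ r)
    (h : ∀ u ∈ Ioc 0 1, 0 ≤ reducedGap α r u) : r ≤ 1 := by
  have hderiv := (hasDerivAt_reducedGap_one (α := α) hr).nonpos_of_eventually_le_left <| by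
    filter_upwards [Ioo_mem_nhdsLT zero_lt_one] with u hu
    rw [reducedGap_one hr]
    exact h u ⟨hu.1, hu.2.le⟩
  rw [sub_nonpos, mul_div_assoc', le_div_iff₀ (by linarith)] at hderiv
  nlinarith

theorem two_rpow_inv_sub_one_mul_le_one_of_reducedGap_nonneg (hα : 0 < α) (hr : 0 ≤ r)
    (h : ∀ u ∈ Ioc 0 1, 0 ≤ reducedGap α r u) : (2 ^ α⁻¹ - 1) * r ≤ 1 := by
  have hcont : ContinuousAt (reducedGap α r) 0 :=
    (continuousAt_const.add (continuousAt_rpow_const 0 α (Or.inr hα.le))).sub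
      (continuousAt_const.mul ((continuousAt_rpow_const _ α (Or.inr hα.le)).comp (by fun_prop)))
  have h₀ : 0 ≤ reducedGap α r 0 :=
    ge_of_tendsto (hcont.tendsto.mono_left nhdsWithin_le_nhds) <| by
      filter_upwards [Ioc_mem_nhdsGT zero_lt_one] with u hu using h u hu
  rw [reducedGap, zero_rpow hα.ne', add_zero, add_zero] at h₀
  have hq := (two_mul_rpow_le_rpow_iff (x := r / (1 + r)) hα (by positivity) zero_le_one).1
    (by rw [one_rpow]; linarith)
  rw [mul_div_assoc', div_le_one (by linarith)] at hq
  linarith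

theorem forall_reducedGap_nonneg_iff (hα : 0 < α) (hr : 0 ≤ r) :
    (∀ u ∈ Ioc 0 1, 0 ≤ reducedGap α r u) ↔ r ≤ 1 ∧ (2 ^ α⁻¹ - 1) * r ≤ 1 := by
  refine ⟨fun h => ⟨le_one_of_reducedGap_nonneg hα hr h,
    two_rpow_inv_sub_one_mul_le_one_of_reducedGap_nonneg hα hr h⟩, ?_⟩
  rintro ⟨hr₁, hrq⟩ u ⟨hu₀, hu₁⟩
  rcases le_total 1 α with hα₁ | hα₁
  · exact reducedGap_nonneg_of_one_le hα₁ hr hr₁ hu₀.le hu₁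
  · exact reducedGap_nonneg_of_le_one hα hα₁ hr hrq hu₀ hu₁

end reducedGap

theorem exp_neg_mul_cosh_div_cosh (t c : ℝ) :
    exp (-t) * cosh (t - c) / cosh c = (exp (-(2 * c)) + exp (-(2 * t))) / (1 + exp (-(2 * c))) := by
  simp only [cosh_eq, neg_sub, exp_neg, exp_sub, two_mul, exp_add]
  field_simp

theorem pzQE_zero_eq (α c t : ℝ) :
    pzQE α c 0 t = reducedGap α (exp (-(2 * c))) (exp (-(2 * t))) / 4 := by
  have hexp₂ : exp (-2 * α * (t - 0)) = exp (-(2 * t)) ^ α := by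
    rw [← exp_mul]; ring_nf
  have hexp₁ : exp (-α * (t - 0)) = exp (-t) ^ α := by
    rw [← exp_mul]; ring_nf
  have hratio : 2 * exp (-α * (t - 0)) * cosh (t - c) ^ α / cosh (0 - c) ^ α
      = 2 * (exp (-t) * cosh (t - c) / cosh c) ^ α := by
    rw [zero_sub, cosh_neg, hexp₁, mul_assoc, mul_div_assoc,
      div_rpow (by positivity) (cosh_pos c).le, mul_rpow (exp_pos _).le (cosh_pos _).le]
  rw [pzQE, reducedGap, hexp₂, hratio, exp_neg_mul_cosh_div_cosh]
  ring

theorem t0a_le_iff {α : ℝ} (hα : 0 < α) (c : ℝ) :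
    t0a α ≤ c ↔ exp (-(2 * c)) ≤ 1 ∧ (2 ^ α⁻¹ - 1) * exp (-(2 * c)) ≤ 1 := by
  have hq : 0 < (2 : ℝ) ^ α⁻¹ - 1 := sub_pos.2 (one_lt_rpow one_lt_two (inv_pos.2 hα))
  rw [t0a, max_le_iff, one_div α, exp_le_one_iff, neg_nonpos, exp_neg, ← div_eq_mul_inv,
    div_le_one (exp_pos _), ← log_le_iff_le_exp hq]
  constructor <;> rintro ⟨h₁, h₂⟩ <;> constructor <;> linarith

theorem forall_exp_neg_two_mul_iff (P : ℝ → Prop) :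
    (∀ t, 0 ≤ t → P (exp (-(2 * t)))) ↔ ∀ u ∈ Ioc 0 1, P u := by
  refine ⟨fun h u ⟨hu₀, hu₁⟩ => ?_, fun h t ht => h _ ⟨exp_pos _, exp_le_one_iff.2 (by linarith)⟩⟩
  have := h (-log u / 2) (by linarith [log_nonpos hu₀.le hu₁])
  rwa [show -(2 * (-log u / 2)) = log u by ring, exp_log hu₀] at this

theorem pzQE_eq_pzQE_zero (α t₀ s t : ℝ) : pzQE α t₀ s t = pzQE α (t₀ - s) 0 (t - s) := by
  simp only [pzQE]
  ring_nf

theorem forall_pzQE_zero_nonneg_iff {α : ℝ} (hα : 0 < α) (c : ℝ) :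
    (∀ t, 0 ≤ t → 0 ≤ pzQE α c 0 t) ↔ t0a α ≤ c := by
  simp_rw [pzQE_zero_eq, le_div_iff₀ (zero_lt_four : (0 : ℝ) < 4), zero_mul]
  rw [forall_exp_neg_two_mul_iff (fun u => 0 ≤ reducedGap α (exp (-(2 * c))) u),
    forall_reducedGap_nonneg_iff hα (exp_pos _).le, t0a_le_iff hα]

theorem forall_pzQE_nonneg_iff {α : ℝ} (hα : 0 < α) (t₀ s : ℝ) :
    (∀ t, s ≤ t → 0 ≤ pzQE α t₀ s t) ↔ t0a α ≤ t₀ - s := by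
  rw [← forall_pzQE_zero_nonneg_iff hα]
  simp_rw [pzQE_eq_pzQE_zero α t₀ s]
  refine ⟨fun h τ hτ => by simpa using h (τ + s) (by linarith), fun h t ht => h _ (by linarith)⟩

/-- For the quasi-eternal non-Markovian evolution (intermediate maps
CPTP iff `pzQE α t₀ s t ≥ 0`): the dynamical maps (case `s = 0`) are CPTP for all
`t ≥ 0` iff `t₀ ≥ t_{0,α}`, and for `t₀ ≥ t_{0,α}` the useless-noise cutoff
`T^Λ = sup{T ≥ 0 | (A) ∧ (B)}` equals `t₀ − t_{0,α}`. -/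
theorem stmt17 (α t₀ : ℝ) (hα : 0 < α) :
    (∀ t₀' : ℝ, ((∀ t : ℝ, 0 ≤ t → 0 ≤ pzQE α t₀' 0 t) ↔ t0a α ≤ t₀')) ∧
    (t0a α ≤ t₀ →
      sSup {T : ℝ | 0 ≤ T ∧
          (∀ s t : ℝ, 0 ≤ s → s ≤ t → t ≤ T → 0 ≤ pzQE α t₀ s t) ∧
          (∀ t : ℝ, T ≤ t → 0 ≤ pzQE α t₀ T t)} = t₀ - t0a α) := by
  refine ⟨forall_pzQE_zero_nonneg_iff hα, fun h => IsGreatest.csSup_eq ⟨⟨?_, ?_, ?_⟩, ?_⟩⟩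
  · exact sub_nonneg.2 h
  · intro s t _ hst ht
    exact (forall_pzQE_nonneg_iff hα t₀ s).2 (by linarith) t hst
  · exact (forall_pzQE_nonneg_iff hα t₀ _).2 (by linarith)
  · rintro T ⟨-, -, hB⟩
    linarith [(forall_pzQE_nonneg_iff hα t₀ T).1 hB]
end

section
/- Let M^{mix}(Λ) = min{p ∈ [0,1] : ∃ Markovian Λ^M with (1−p)Λ + pΛ^M Markovian}. If Λ is an NNM evolution with cutoff T^Λ and PNM core Λ̄_t = V_{t+T^Λ,T^Λ}, then M^{mix}(Λ) ≤ M^{mix}(Λ̄): given a Markovian Γ̄ with (1−p̄)Λ̄ + p̄Γ̄ Markovian, the evolution Γ defined by Γ_t = Λ_t for t < T^Λ and Γ_t = Γ̄_{t−T^Λ} ∘ Λ_{T^Λ} for t ≥ T^Λ is Markovian and makes (1−p̄)Λ + p̄Γ CP-divisible. -/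
open scoped ComplexOrder

/-- Choi matrix of a linear map on `d × d` complex matrices. -/
noncomputable def choi {d : ℕ}
    (Φ : Matrix (Fin d) (Fin d) ℂ →ₗ[ℂ] Matrix (Fin d) (Fin d) ℂ) :
    Matrix (Fin d × Fin d) (Fin d × Fin d) ℂ :=
  Matrix.of fun p q => (Φ (Matrix.single p.1 q.1 1)) p.2 q.2

/-- CPTP: positive semidefinite Choi matrix (Choi's theorem) and trace preservation. -/
def IsCPTP {d : ℕ} (Φ : Matrix (Fin d) (Fin d) ℂ →ₗ[ℂ] Matrix (Fin d) (Fin d) ℂ) : Prop :=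
  (choi Φ).PosSemidef ∧ ∀ A, (Φ A).trace = A.trace

/-- An evolution is Markovian iff it is CP-divisible: it admits CPTP intermediate maps
between any two ordered times. -/
def Markovian {d : ℕ}
    (Γ : ℝ → (Matrix (Fin d) (Fin d) ℂ →ₗ[ℂ] Matrix (Fin d) (Fin d) ℂ)) : Prop :=
  ∃ W : ℝ → ℝ → (Matrix (Fin d) (Fin d) ℂ →ₗ[ℂ] Matrix (Fin d) (Fin d) ℂ),
    ∀ s t : ℝ, 0 ≤ s → s ≤ t → Γ t = (W t s).comp (Γ s) ∧ IsCPTP (W t s)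

/-- Convex mixture `(1−p)Λ + pΓ` of two evolutions. -/
noncomputable def mixEvo {d : ℕ} (p : ℝ)
    (Λ Γ : ℝ → (Matrix (Fin d) (Fin d) ℂ →ₗ[ℂ] Matrix (Fin d) (Fin d) ℂ)) :
    ℝ → (Matrix (Fin d) (Fin d) ℂ →ₗ[ℂ] Matrix (Fin d) (Fin d) ℂ) :=
  fun t => ((1 - p : ℝ) : ℂ) • Λ t + ((p : ℝ) : ℂ) • Γ t

/-- `M^{mix}(Λ)`: the minimal weight of incoherent Markovian noise making `Λ`
Markovian. -/
noncomputable def Mmix {d : ℕ}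
    (Λ : ℝ → (Matrix (Fin d) (Fin d) ℂ →ₗ[ℂ] Matrix (Fin d) (Fin d) ℂ)) : ℝ :=
  sInf {p : ℝ | p ∈ Set.Icc (0 : ℝ) 1 ∧
    ∃ Γ : ℝ → (Matrix (Fin d) (Fin d) ℂ →ₗ[ℂ] Matrix (Fin d) (Fin d) ℂ),
      (∀ t, 0 ≤ t → IsCPTP (Γ t)) ∧ Markovian Γ ∧ Markovian (mixEvo p Λ Γ)}

/-
After the cutoff `T` both `Λ` and the pre-processed noise `Γ` factor through `Λ_T`, so the mixture
is `((1-p)Λ̄ + pΓ̄)_{t-T} ∘ Λ_T`: its intermediate maps between times `≥ T` are those of the core's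
mixture, shifted by `T`. Before `T` the mixture is `Λ` itself, which is CP-divisible there, and an
intermediate map across `T` is a CPTP map of the shifted mixture composed with the CPTP map
`V_{T,s}`. Composition of CPTP maps is CPTP via Kraus decompositions obtained from the square root
of the Choi matrix. Hence every weight admissible for `Λ̄` is admissible for `Λ`.
-/

open scoped Matrix

abbrev SuperOp (d : ℕ) := Matrix (Fin d) (Fin d) ℂ →ₗ[ℂ] Matrix (Fin d) (Fin d) ℂ

section CPTP

variable {d : ℕ}

def conjMap (K : Matrix (Fin d) (Fin d) ℂ) : SuperOp d where
  toFun A := K * A * Kᴴ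
  map_add' A B := by simp [Matrix.mul_add, Matrix.add_mul]
  map_smul' c A := by simp

lemma conjMap_apply (K A : Matrix (Fin d) (Fin d) ℂ) : conjMap K A = K * A * Kᴴ := rfl

lemma choi_add (Φ Ψ : SuperOp d) : choi (Φ + Ψ) = choi Φ + choi Ψ := by
  ext p q; simp [choi]

lemma choi_smul (c : ℂ) (Φ : SuperOp d) : choi (c • Φ) = c • choi Φ := by
  ext p q; simp [choi]

lemma choi_sum {ι : Type*} (s : Finset ι) (f : ι → SuperOp d) :
    choi (∑ i ∈ s, f i) = ∑ i ∈ s, choi (f i) :=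
  map_sum (AddMonoidHom.mk' choi choi_add) f s

lemma choi_injective : Function.Injective (choi (d := d)) := by
  intro Φ Ψ h
  ext A : 1
  rw [Matrix.matrix_eq_sum_single A, map_sum, map_sum]
  refine Finset.sum_congr rfl fun i _ => ?_
  rw [map_sum, map_sum]
  refine Finset.sum_congr rfl fun j _ => ?_
  rw [← mul_one (A i j), ← smul_eq_mul, ← Matrix.smul_single, _root_.map_smul, _root_.map_smul]
  congr 1
  ext x y
  simpa [choi] using congrFun (congrFun h (i, x)) (j, y)

/-- The Choi matrix of `A ↦ K A Kᴴ` is `v vᴴ` for the vectorisation `v (i, x) = K x i`. -/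
lemma posSemidef_choi_conjMap (K : Matrix (Fin d) (Fin d) ℂ) : (choi (conjMap K)).PosSemidef := by
  have h : choi (conjMap K)
      = (Matrix.of fun (_ : Fin 1) (p : Fin d × Fin d) => star (K p.2 p.1))ᴴ *
        (Matrix.of fun (_ : Fin 1) (p : Fin d × Fin d) => star (K p.2 p.1)) := by
    ext p q
    simp [choi, conjMap_apply, Matrix.mul_apply, Matrix.single, Matrix.conjTranspose_apply,
      ite_and, Finset.sum_ite_eq]
  rw [h]
  exact Matrix.posSemidef_conjTranspose_mul_self _

/-- The rows of `√(choi Φ)` are the vectorised Kraus operators. -/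
lemma exists_eq_sum_conjMap_of_posSemidef_choi {Φ : SuperOp d} (h : (choi Φ).PosSemidef) :
    ∃ K : Fin d × Fin d → Matrix (Fin d) (Fin d) ℂ, Φ = ∑ k, conjMap (K k) := by
  open scoped MatrixOrder in
  obtain ⟨B, hBB⟩ : ∃ B : Matrix (Fin d × Fin d) (Fin d × Fin d) ℂ, Bᴴ * B = choi Φ :=
    ⟨CFC.sqrt (choi Φ), by
      rw [← Matrix.star_eq_conjTranspose, (CFC.sqrt_nonneg (choi Φ)).isSelfAdjoint.star_eq,
        CFC.sqrt_mul_sqrt_self _ (Matrix.nonneg_iff_posSemidef.mpr h)]⟩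
  refine ⟨fun k => Matrix.of fun x i => star (B k (i, x)), choi_injective ?_⟩
  rw [choi_sum]
  ext ⟨i, x⟩ ⟨j, y⟩
  rw [← hBB, Matrix.mul_apply, Matrix.sum_apply]
  refine Finset.sum_congr rfl fun k _ => ?_
  simp [choi, conjMap_apply, Matrix.mul_apply, Matrix.single, Matrix.conjTranspose_apply,
    ite_and, Finset.sum_ite_eq, mul_comm]

lemma IsCPTP.comp {Φ Ψ : SuperOp d} (hΦ : IsCPTP Φ) (hΨ : IsCPTP Ψ) : IsCPTP (Φ.comp Ψ) := by
  obtain ⟨K, hK⟩ := exists_eq_sum_conjMap_of_posSemidef_choi hΦ.1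
  obtain ⟨L, hL⟩ := exists_eq_sum_conjMap_of_posSemidef_choi hΨ.1
  have hkraus : Φ.comp Ψ = ∑ k, ∑ l, conjMap (K l * L k) := by
    ext A : 1
    simp only [LinearMap.comp_apply, hK, hL, LinearMap.coe_sum, Finset.sum_apply, map_sum]
    refine Finset.sum_congr rfl fun k _ => Finset.sum_congr rfl fun l _ => ?_
    simp [conjMap_apply, Matrix.conjTranspose_mul, Matrix.mul_assoc]
  refine ⟨?_, fun A => by rw [LinearMap.comp_apply, hΦ.2, hΨ.2]⟩
  rw [hkraus, choi_sum]
  refine Matrix.posSemidef_sum _ fun k _ => ?_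
  rw [choi_sum]
  exact Matrix.posSemidef_sum _ fun l _ => posSemidef_choi_conjMap _

lemma IsCPTP.mix {Φ Ψ : SuperOp d} (hΦ : IsCPTP Φ) (hΨ : IsCPTP Ψ) {p : ℝ} (hp0 : 0 ≤ p)
    (hp1 : p ≤ 1) : IsCPTP (((1 - p : ℝ) : ℂ) • Φ + ((p : ℝ) : ℂ) • Ψ) := by
  refine ⟨?_, fun A => ?_⟩
  · rw [choi_add, choi_smul, choi_smul, Complex.coe_smul, Complex.coe_smul]
    exact (hΦ.1.smul (sub_nonneg.2 hp1)).add (hΨ.1.smul hp0)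
  · simp only [LinearMap.add_apply, LinearMap.smul_apply, Matrix.trace_add, Matrix.trace_smul,
      hΦ.2, hΨ.2, smul_eq_mul]
    push_cast
    ring

lemma isCPTP_id : IsCPTP (LinearMap.id : SuperOp d) := by
  refine ⟨?_, fun _ => rfl⟩
  have h : (LinearMap.id : SuperOp d) = conjMap 1 := by
    ext A : 1
    simp [conjMap_apply]
  exact h ▸ posSemidef_choi_conjMap 1

end CPTP

section Evolution

variable {d : ℕ}

lemma markovian_iff_forall_exists {Γ : ℝ → SuperOp d} :
    Markovian Γ ↔ ∀ s t : ℝ, 0 ≤ s → s ≤ t → ∃ W : SuperOp d, Γ t = W.comp (Γ s) ∧ IsCPTP W := by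
  refine ⟨fun ⟨W, hW⟩ s t hs hst => ⟨W t s, hW s t hs hst⟩, fun h => ?_⟩
  choose W hW using h
  classical
  exact ⟨fun t s => if hst : 0 ≤ s ∧ s ≤ t then W s t hst.1 hst.2 else 0,
    fun s t hs hst => by simpa only [dif_pos (And.intro hs hst)] using hW s t hs hst⟩

lemma markovian_const (Φ : SuperOp d) : Markovian fun _ => Φ :=
  ⟨fun _ _ => LinearMap.id, fun _ _ _ _ => ⟨rfl, isCPTP_id⟩⟩

noncomputable def concatEvo (Λ : ℝ → SuperOp d) (T : ℝ) (Φ : ℝ → SuperOp d) : ℝ → SuperOp d :=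
  fun t => if t < T then Λ t else (Φ (t - T)).comp (Λ T)

variable {Λ Φ : ℝ → SuperOp d} {T t : ℝ}

lemma concatEvo_of_lt (ht : t < T) : concatEvo Λ T Φ t = Λ t := if_pos ht

lemma concatEvo_of_le (ht : T ≤ t) : concatEvo Λ T Φ t = (Φ (t - T)).comp (Λ T) :=
  if_neg (not_lt.2 ht)

lemma isCPTP_concatEvo (hT : 0 ≤ T) (hΛ : ∀ t, 0 ≤ t → IsCPTP (Λ t))
    (hΦ : ∀ u, 0 ≤ u → IsCPTP (Φ u)) (ht : 0 ≤ t) : IsCPTP (concatEvo Λ T Φ t) := by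
  rcases lt_or_ge t T with htT | hTt
  · exact concatEvo_of_lt htT ▸ hΛ t ht
  · exact concatEvo_of_le hTt ▸ (hΦ _ (sub_nonneg.2 hTt)).comp (hΛ T hT)

lemma markovian_concatEvo {V : ℝ → ℝ → SuperOp d}
    (hΛ : ∀ s t, 0 ≤ s → s ≤ t → t ≤ T → Λ t = (V t s).comp (Λ s) ∧ IsCPTP (V t s))
    (hΦ : Markovian Φ) (hΦ₀ : IsCPTP (Φ 0)) : Markovian (concatEvo Λ T Φ) := by
  rw [markovian_iff_forall_exists] at hΦ ⊢
  intro s t hs hst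
  rcases lt_or_ge t T with htT | hTt
  · rw [concatEvo_of_lt htT, concatEvo_of_lt (hst.trans_lt htT)]
    exact ⟨V t s, hΛ s t hs hst htT.le⟩
  rcases lt_or_ge s T with hsT | hTs
  · obtain ⟨W, hW, hWcp⟩ := hΦ 0 (t - T) le_rfl (sub_nonneg.2 hTt)
    obtain ⟨hΛT, hVcp⟩ := hΛ s T hs hsT.le le_rfl
    refine ⟨(W.comp (Φ 0)).comp (V T s), ?_, (hWcp.comp hΦ₀).comp hVcp⟩
    rw [concatEvo_of_le hTt, concatEvo_of_lt hsT, hW, hΛT]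
    simp only [LinearMap.comp_assoc]
  · obtain ⟨W, hW, hWcp⟩ := hΦ (s - T) (t - T) (sub_nonneg.2 hTs) (by linarith)
    refine ⟨W, ?_, hWcp⟩
    rw [concatEvo_of_le hTt, concatEvo_of_le hTs, hW, LinearMap.comp_assoc]

lemma mixEvo_concatEvo {Λb : ℝ → SuperOp d} (p : ℝ)
    (hΛb : ∀ t, T ≤ t → Λ t = (Λb (t - T)).comp (Λ T)) :
    mixEvo p Λ (concatEvo Λ T Φ) = concatEvo Λ T (mixEvo p Λb Φ) := by
  funext t
  rcases lt_or_ge t T with htT | hTt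
  · simp only [mixEvo, concatEvo_of_lt htT, ← add_smul]
    push_cast
    rw [sub_add_cancel, one_smul]
  · simp only [mixEvo, concatEvo_of_le hTt]
    rw [hΛb t hTt, LinearMap.add_comp, LinearMap.smul_comp, LinearMap.smul_comp]

end Evolution

section MixingWeight

variable {d : ℕ}

/-- The set whose infimum is `Mmix Λ`. -/
def mixWeights (Λ : ℝ → SuperOp d) : Set ℝ :=
  {p : ℝ | p ∈ Set.Icc (0 : ℝ) 1 ∧
    ∃ Γ : ℝ → SuperOp d, (∀ t, 0 ≤ t → IsCPTP (Γ t)) ∧ Markovian Γ ∧ Markovian (mixEvo p Λ Γ)}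

lemma one_mem_mixWeights (Λ : ℝ → SuperOp d) : (1 : ℝ) ∈ mixWeights Λ := by
  have hmix : mixEvo 1 Λ (fun _ => LinearMap.id) = fun _ => LinearMap.id := by
    funext t
    simp [mixEvo]
  refine ⟨⟨zero_le_one, le_rfl⟩, fun _ => LinearMap.id, fun _ _ => isCPTP_id,
    markovian_const _, ?_⟩
  rw [hmix]
  exact markovian_const _

lemma Mmix_le_Mmix {Λ Λ' : ℝ → SuperOp d} (h : mixWeights Λ' ⊆ mixWeights Λ) :
    Mmix Λ ≤ Mmix Λ' :=
  csInf_le_csInf ⟨0, fun _ hp => hp.1.1⟩ ⟨1, one_mem_mixWeights Λ'⟩ h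

end MixingWeight

theorem stmt19_general {d : ℕ}
    (Λ : ℝ → (Matrix (Fin d) (Fin d) ℂ →ₗ[ℂ] Matrix (Fin d) (Fin d) ℂ))
    (V : ℝ → ℝ → (Matrix (Fin d) (Fin d) ℂ →ₗ[ℂ] Matrix (Fin d) (Fin d) ℂ))
    (TΛ : ℝ) (hTΛ : 0 ≤ TΛ)
    (hdiv : ∀ s t : ℝ, 0 ≤ s → s ≤ t → Λ t = (V t s).comp (Λ s))
    (hCPdiv : ∀ s t : ℝ, 0 ≤ s → s ≤ t → t ≤ TΛ → IsCPTP (V t s))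
    (hB : ∀ t : ℝ, TΛ ≤ t → IsCPTP (V t TΛ))
    (hEvo : ∀ t : ℝ, 0 ≤ t → IsCPTP (Λ t)) :
    (∀ p : ℝ, p ∈ Set.Icc (0 : ℝ) 1 →
      ∀ Γb : ℝ → (Matrix (Fin d) (Fin d) ℂ →ₗ[ℂ] Matrix (Fin d) (Fin d) ℂ),
        (∀ t, 0 ≤ t → IsCPTP (Γb t)) → Markovian Γb →
        Markovian (mixEvo p (fun t => V (t + TΛ) TΛ) Γb) →
        (Markovian (fun t => if t < TΛ then Λ t else (Γb (t - TΛ)).comp (Λ TΛ)) ∧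
         Markovian (mixEvo p Λ
           (fun t => if t < TΛ then Λ t else (Γb (t - TΛ)).comp (Λ TΛ))))) ∧
    Mmix Λ ≤ Mmix (fun t => V (t + TΛ) TΛ) := by
  have hΛ : ∀ s t, 0 ≤ s → s ≤ t → t ≤ TΛ → Λ t = (V t s).comp (Λ s) ∧ IsCPTP (V t s) :=
    fun s t hs hst htT => ⟨hdiv s t hs hst, hCPdiv s t hs hst htT⟩
  have hcore : ∀ t, TΛ ≤ t → Λ t = (V (t - TΛ + TΛ) TΛ).comp (Λ TΛ) := fun t ht => by
    rw [sub_add_cancel]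
    exact hdiv TΛ t hTΛ ht
  have key : ∀ p : ℝ, p ∈ Set.Icc (0 : ℝ) 1 → ∀ Γb : ℝ → SuperOp d,
      (∀ t, 0 ≤ t → IsCPTP (Γb t)) → Markovian Γb →
      Markovian (mixEvo p (fun t => V (t + TΛ) TΛ) Γb) →
      Markovian (concatEvo Λ TΛ Γb) ∧ Markovian (mixEvo p Λ (concatEvo Λ TΛ Γb)) := by
    intro p hp Γb hΓb hM hMix
    refine ⟨markovian_concatEvo hΛ hM (hΓb 0 le_rfl), ?_⟩
    rw [mixEvo_concatEvo (Λb := fun u => V (u + TΛ) TΛ) p hcore]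
    exact markovian_concatEvo hΛ hMix ((hB _ (by linarith)).mix (hΓb 0 le_rfl) hp.1 hp.2)
  refine ⟨key, Mmix_le_Mmix ?_⟩
  rintro p ⟨hp, Γb, hΓb, hM, hMix⟩
  exact ⟨hp, concatEvo Λ TΛ Γb, fun _ ht => isCPTP_concatEvo hTΛ hEvo hΓb ht, key p hp Γb hΓb hM hMix⟩

/-- For an NNM evolution `Λ` with cutoff `TΛ` and PNM core
`Λ̄ t = V (t+TΛ) TΛ`: whenever a Markovian `Γ̄` makes `(1−p̄)Λ̄ + p̄Γ̄` Markovian, the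
Markovian pre-processed evolution `Γ_t = Λ_t` (`t < TΛ`), `Γ_t = Γ̄_{t−TΛ} ∘ Λ_{TΛ}`
(`t ≥ TΛ`) is Markovian and makes `(1−p̄)Λ + p̄Γ` Markovian; consequently
`M^{mix}(Λ) ≤ M^{mix}(Λ̄)`. -/
theorem stmt19 {d : ℕ}
    (Λ : ℝ → (Matrix (Fin d) (Fin d) ℂ →ₗ[ℂ] Matrix (Fin d) (Fin d) ℂ))
    (V : ℝ → ℝ → (Matrix (Fin d) (Fin d) ℂ →ₗ[ℂ] Matrix (Fin d) (Fin d) ℂ))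
    (TΛ : ℝ) (hTΛ : 0 ≤ TΛ)
    (hdiv : ∀ s t : ℝ, 0 ≤ s → s ≤ t → Λ t = (V t s).comp (Λ s))
    (hCPdiv : ∀ s t : ℝ, 0 ≤ s → s ≤ t → t ≤ TΛ → IsCPTP (V t s))
    (hB : ∀ t : ℝ, TΛ ≤ t → IsCPTP (V t TΛ))
    (hEvo : ∀ t : ℝ, 0 ≤ t → IsCPTP (Λ t))
    (hinv : ∀ t : ℝ, 0 ≤ t → Function.Bijective (Λ t)) :
    (∀ p : ℝ, p ∈ Set.Icc (0 : ℝ) 1 →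
      ∀ Γb : ℝ → (Matrix (Fin d) (Fin d) ℂ →ₗ[ℂ] Matrix (Fin d) (Fin d) ℂ),
        (∀ t, 0 ≤ t → IsCPTP (Γb t)) → Markovian Γb →
        Markovian (mixEvo p (fun t => V (t + TΛ) TΛ) Γb) →
        (Markovian (fun t => if t < TΛ then Λ t else (Γb (t - TΛ)).comp (Λ TΛ)) ∧
         Markovian (mixEvo p Λ
           (fun t => if t < TΛ then Λ t else (Γb (t - TΛ)).comp (Λ TΛ))))) ∧
    Mmix Λ ≤ Mmix (fun t => V (t + TΛ) TΛ) :=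
  stmt19_general Λ V TΛ hTΛ hdiv hCPdiv hB hEvo
end
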